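/- For every integer n ≥ 1 and every j with 0 ≤ j ≤ n, the number of big Schröder paths of length 2n with exactly j double horizontal steps equals (1/(n−j+1))·C(n,j)·C(2n−j, n), where C denotes the binomial coefficient. -/

import Mathlib

/-- A step of a Schröder path: upstep, downstep, or a *double* horizontal step. -/
inductive SchStep : Type
  | up : SchStep
  | down : SchStep
  | horiz : SchStep
deriving DecidableEq

/-- The number of unit steps a step occupies: `horiz` is a double horizontal step. -/
def SchStep.len : SchStep → ℕ
  | .up => 1
  | .down => 1
  | .horiz => 2

/-- The change in height produced by a step. -/
def SchStep.rise : SchStep → ℤ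
  | .up => 1
  | .down => -1
  | .horiz => 0

/-- The length of a path (a double horizontal step counts 2). -/
def pathLen (p : List SchStep) : ℕ := (p.map SchStep.len).sum

/-- The final height of a path started at height 0. -/
def pathHeight (p : List SchStep) : ℤ := (p.map SchStep.rise).sum

/-- A big Schröder path: ends at height 0 and never goes below the x-axis. -/
def IsBigSchroeder (p : List SchStep) : Prop :=
  pathHeight p = 0 ∧ ∀ q : List SchStep, q <+: p → 0 ≤ pathHeight q

/-- A little Schröder path: a big Schröder path with no double horizontal step at
height 0. -/
def IsLittleSchroeder (p : List SchStep) : Prop :=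
  IsBigSchroeder p ∧ ∀ q r : List SchStep, p = q ++ SchStep.horiz :: r → pathHeight q ≠ 0

/-! Deleting the double horizontal steps from a big Schröder path leaves a Dyck word, since
horizontal steps do not change the height; the path is recovered from this Dyck word and the
positions of its horizontal steps. So the paths with `j` horizontal and `m` up steps number
`C(j + 2m, j) · Cat m`, and for `n = j + m` this is the stated product because
`(m + 1) Cat m = C(2m, m)` and `C(j + 2m, j + m) C(j + m, j) = C(j + 2m, j) C(2m, m)`. -/

open List Finset

lemma List.count_true_ofFn {L : ℕ} (f : Fin L → Bool) :
    (List.ofFn f).count true = #{i | f i = true} := by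
  rw [← Multiset.coe_count, ← Fin.univ_val_map, Multiset.count_map]
  exact congrArg Multiset.card (Multiset.filter_congr fun _ _ => eq_comm)

lemma List.ofFn_getD_eq_self {α : Type*} {L : ℕ} {l : List α} (d : α) (h : l.length = L) :
    List.ofFn (fun i : Fin L => l.getD i d) = l := by
  subst h
  simp

def boolListEquivFinset (L k : ℕ) :
    {bs : List Bool // bs.length = L ∧ bs.count true = k} ≃ {s : Finset (Fin L) // #s = k} where
  toFun bs := ⟨({i | bs.1.getD i false} : Finset (Fin L)), by
    rw [← List.count_true_ofFn, List.ofFn_getD_eq_self false bs.2.1, bs.2.2]⟩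
  invFun s := ⟨List.ofFn (fun i => decide (i ∈ s.1)), by simp, by
    rw [List.count_true_ofFn]; simpa using s.2⟩
  left_inv bs := Subtype.ext <| by simpa using List.ofFn_getD_eq_self false bs.2.1
  right_inv s := Subtype.ext <| by ext; simp

lemma card_boolList (L k : ℕ) :
    Nat.card {bs : List Bool // bs.length = L ∧ bs.count true = k} = L.choose k := by
  rw [Nat.card_congr (boolListEquivFinset L k), Nat.card_eq_fintype_card,
    Fintype.card_finset_len, Fintype.card_fin]

namespace SchStep

def dyckStep? : SchStep → Option DyckStep
  | .up => some .U
  | .down => some .D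
  | .horiz => none

end SchStep

namespace Schroeder

def horizMask (p : List SchStep) : List Bool := p.map (fun s => decide (s = .horiz))

def dyckPart (p : List SchStep) : List DyckStep := p.filterMap SchStep.dyckStep?

def interleave : List Bool → List DyckStep → List SchStep
  | [], _ => []
  | true :: bs, l => .horiz :: interleave bs l
  | false :: bs, .U :: l => .up :: interleave bs l
  | false :: bs, .D :: l => .down :: interleave bs l
  | false :: _, [] => []

lemma length_horizMask (p : List SchStep) : (horizMask p).length = p.length := by
  simp [horizMask]

lemma count_true_horizMask (p : List SchStep) :
    (horizMask p).count true = p.count .horiz := by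
  induction p with
  | nil => rfl
  | cons a p ih => cases a <;> simp_all [horizMask]

lemma count_U_dyckPart (p : List SchStep) : (dyckPart p).count .U = p.count .up := by
  induction p with
  | nil => rfl
  | cons a p ih => cases a <;> simp_all [dyckPart, SchStep.dyckStep?, filterMap_cons]

lemma count_D_dyckPart (p : List SchStep) : (dyckPart p).count .D = p.count .down := by
  induction p with
  | nil => rfl
  | cons a p ih => cases a <;> simp_all [dyckPart, SchStep.dyckStep?, filterMap_cons]

lemma length_eq_count_add (p : List SchStep) :
    p.length = p.count .up + p.count .down + p.count .horiz := by
  induction p with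
  | nil => rfl
  | cons a p ih => cases a <;> simp_all <;> omega

lemma pathLen_eq_length_add_count_horiz (p : List SchStep) :
    pathLen p = p.length + p.count .horiz := by
  induction p with
  | nil => rfl
  | cons a p ih => cases a <;> simp_all [pathLen, SchStep.len] <;> omega

lemma pathHeight_eq_count_up_sub_count_down (p : List SchStep) :
    pathHeight p = (p.count .up : ℤ) - p.count .down := by
  induction p with
  | nil => rfl
  | cons a p ih => cases a <;> simp_all [pathHeight, SchStep.rise] <;> ring

lemma interleave_horizMask_dyckPart (p : List SchStep) :
    interleave (horizMask p) (dyckPart p) = p := by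
  induction p with
  | nil => rfl
  | cons a p ih =>
    cases a <;> simpa [horizMask, dyckPart, SchStep.dyckStep?, interleave, filterMap_cons] using ih

lemma horizMask_interleave_and_dyckPart_interleave (bs : List Bool) (l : List DyckStep)
    (h : l.length = bs.count false) :
    horizMask (interleave bs l) = bs ∧ dyckPart (interleave bs l) = l := by
  induction bs, l using interleave.induct <;>
    simp_all [interleave, horizMask, dyckPart, SchStep.dyckStep?, filterMap_cons]

lemma dyckPart_append (p q : List SchStep) : dyckPart (p ++ q) = dyckPart p ++ dyckPart q :=
  filterMap_append

lemma exists_prefix_dyckPart_eq_take (p : List SchStep) (i : ℕ) :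
    ∃ q, q <+: p ∧ (dyckPart p).take i = dyckPart q := by
  induction p generalizing i with
  | nil => exact ⟨[], prefix_rfl, by simp [dyckPart]⟩
  | cons a p ih =>
    rcases i with _ | i
    · exact ⟨[], nil_prefix, by simp [dyckPart]⟩
    obtain ⟨q, hq, he⟩ := ih (if a = .horiz then i + 1 else i)
    refine ⟨a :: q, cons_prefix_cons.2 ⟨rfl, hq⟩, ?_⟩
    cases a <;> simpa [dyckPart, SchStep.dyckStep?, filterMap_cons] using he

lemma nonneg_pathHeight_prefixes_iff (p : List SchStep) :
    (∀ q, q <+: p → 0 ≤ pathHeight q) ↔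
      ∀ i, ((dyckPart p).take i).count .D ≤ ((dyckPart p).take i).count .U := by
  simp only [pathHeight_eq_count_up_sub_count_down, sub_nonneg, Nat.cast_le]
  constructor
  · intro h i
    obtain ⟨q, hq, he⟩ := exists_prefix_dyckPart_eq_take p i
    rw [he, count_U_dyckPart, count_D_dyckPart]
    exact h q hq
  · rintro h q ⟨t, rfl⟩
    simpa [dyckPart_append, count_U_dyckPart, count_D_dyckPart] using h (dyckPart q).length

lemma isBigSchroeder_iff (p : List SchStep) :
    IsBigSchroeder p ↔ (dyckPart p).count .U = (dyckPart p).count .D ∧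
      ∀ i, ((dyckPart p).take i).count .D ≤ ((dyckPart p).take i).count .U := by
  rw [IsBigSchroeder, nonneg_pathHeight_prefixes_iff, pathHeight_eq_count_up_sub_count_down,
    sub_eq_zero, Nat.cast_inj, count_U_dyckPart, count_D_dyckPart]

def toDyckWord (p : List SchStep) (hp : IsBigSchroeder p) : DyckWord :=
  ⟨dyckPart p, ((isBigSchroeder_iff p).1 hp).1, ((isBigSchroeder_iff p).1 hp).2⟩

lemma isBigSchroeder_interleave {bs : List Bool} {w : DyckWord}
    (h : w.toList.length = bs.count false) : IsBigSchroeder (interleave bs w) := by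
  rw [isBigSchroeder_iff, (horizMask_interleave_and_dyckPart_interleave bs w h).2]
  exact ⟨w.count_U_eq_count_D, w.count_D_le_count_U⟩

lemma count_up_eq_count_down {p : List SchStep} (hp : IsBigSchroeder p) :
    p.count .up = p.count .down := by
  have := hp.1
  rwa [pathHeight_eq_count_up_sub_count_down, sub_eq_zero, Nat.cast_inj] at this

lemma pathLen_eq_of_isBigSchroeder {p : List SchStep} (hp : IsBigSchroeder p) :
    pathLen p = 2 * (p.count .up + p.count .horiz) := by
  rw [pathLen_eq_length_add_count_horiz, length_eq_count_add, ← count_up_eq_count_down hp]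
  ring

lemma length_eq_count_false {bs : List Bool} {w : DyckWord} {j m : ℕ}
    (hbs : bs.length = j + 2 * m ∧ bs.count true = j) (hw : w.semilength = m) :
    w.toList.length = bs.count false := by
  have := bs.count_false_add_count_true
  rw [← w.two_mul_semilength_eq_length, hw]
  omega

def bigSchroederEquiv (j m : ℕ) :
    {p : List SchStep // IsBigSchroeder p ∧ p.count .horiz = j ∧ p.count .up = m} ≃
      {bs : List Bool // bs.length = j + 2 * m ∧ bs.count true = j} ×
        {w : DyckWord // w.semilength = m} where
  toFun p :=
    (⟨horizMask p, by
        rw [length_horizMask, length_eq_count_add, ← count_up_eq_count_down p.2.1, p.2.2.1,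
          p.2.2.2]
        ring, by rw [count_true_horizMask, p.2.2.1]⟩,
      ⟨toDyckWord p p.2.1, by
        rw [DyckWord.semilength, toDyckWord, count_U_dyckPart, p.2.2.2]⟩)
  invFun x :=
    have hlen := length_eq_count_false x.1.2 x.2.2
    have hinv := horizMask_interleave_and_dyckPart_interleave x.1.1 x.2.1 hlen
    ⟨interleave x.1 x.2.1, isBigSchroeder_interleave hlen,
      by rw [← count_true_horizMask, hinv.1, x.1.2.2],
      by rw [← count_U_dyckPart, hinv.2]; exact x.2.2⟩
  left_inv p := Subtype.ext (interleave_horizMask_dyckPart p)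
  right_inv x :=
    have hinv := horizMask_interleave_and_dyckPart_interleave x.1.1 x.2.1
      (length_eq_count_false x.1.2 x.2.2)
    Prod.ext (Subtype.ext hinv.1) (Subtype.ext (DyckWord.ext hinv.2))

lemma card_bigSchroeder (j m : ℕ) :
    Nat.card {p : List SchStep // IsBigSchroeder p ∧ p.count .horiz = j ∧ p.count .up = m} =
      (j + 2 * m).choose j * catalan m := by
  rw [Nat.card_congr (bigSchroederEquiv j m), Nat.card_prod, card_boolList,
    Nat.card_eq_fintype_card, DyckWord.card_dyckWord_semilength_eq_catalan]

lemma choose_mul_catalan_eq (j m : ℕ) :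
    ((j + 2 * m).choose j * catalan m : ℚ) =
      1 / (m + 1) * (j + m).choose j * (j + 2 * m).choose (j + m) := by
  have hcat : ((m + 1) * catalan m : ℚ) = (2 * m).choose m := by
    exact_mod_cast succ_mul_catalan_eq_centralBinom m
  have hchoose : ((j + 2 * m).choose (j + m) * (j + m).choose j : ℚ) =
      (j + 2 * m).choose j * (2 * m).choose m := by
    have := Nat.choose_mul (n := j + 2 * m) (k := j + m) (s := j) (by omega)
    simp only [add_tsub_cancel_left] at this
    exact_mod_cast this
  field_simp
  linear_combination ((j + 2 * m).choose j : ℚ) * hcat - hchoose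

end Schroeder

open Schroeder

theorem big_schroeder_horiz_count_general (n j : ℕ) (hj : j ≤ n) :
    (Nat.card {p : List SchStep //
        IsBigSchroeder p ∧ pathLen p = 2 * n ∧ p.count SchStep.horiz = j} : ℚ) =
      (1 / ((n : ℚ) - j + 1)) * (n.choose j) * ((2 * n - j).choose n) := by
  obtain ⟨m, rfl⟩ := Nat.exists_eq_add_of_le hj
  have hpaths (p : List SchStep) :
      IsBigSchroeder p ∧ pathLen p = 2 * (j + m) ∧ p.count .horiz = j ↔
        IsBigSchroeder p ∧ p.count .horiz = j ∧ p.count .up = m := by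
    constructor
    · rintro ⟨hp, hlen, hhoriz⟩
      rw [pathLen_eq_of_isBigSchroeder hp] at hlen
      exact ⟨hp, hhoriz, by omega⟩
    · rintro ⟨hp, hhoriz, hup⟩
      exact ⟨hp, by rw [pathLen_eq_of_isBigSchroeder hp]; omega, hhoriz⟩
  rw [Nat.card_congr (Equiv.subtypeEquivRight hpaths), card_bigSchroeder,
    show 2 * (j + m) - j = j + 2 * m by omega]
  push_cast
  rw [choose_mul_catalan_eq, add_sub_cancel_left]

/-- The number of big Schröder paths of length `2n` with exactly `j` double horizontal
steps is `(1/(n-j+1)) C(n,j) C(2n-j, n)`. -/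
theorem big_schroeder_horiz_count (n j : ℕ) (hn : 1 ≤ n) (hj : j ≤ n) :
    (Nat.card {p : List SchStep //
        IsBigSchroeder p ∧ pathLen p = 2 * n ∧ p.count SchStep.horiz = j} : ℚ) =
      (1 / ((n : ℚ) - j + 1)) * (n.choose j) * ((2 * n - j).choose n) :=
  big_schroeder_horiz_count_general n j hj
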